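/- arXiv:2109.08335 — 4 statements merged into one kernel-verified Lean document; each statement's English description precedes it below -/
import Mathlib

section
/- Let V_1, V_2 be finite sets and 𝒰_i ⊆ 𝒫(V_i) for i = 1, 2. Suppose there exist maps ξ : 𝒰_2 → 𝒰_1 and F : ℓ_+(V_1) → ℓ_+(V_2) and constants C_1, C_2 > 0 such that C_1 ∑_{v∈γ} F(ρ)(v) ≥ ∑_{u∈ξ(γ)} ρ(u) and ∑_{v∈V_2} F(ρ)(v)^p ≤ C_2 ∑_{u∈V_1} ρ(u)^p for every ρ ∈ ℓ_+(V_1) and γ ∈ 𝒰_2. Then Mod_p(𝒰_2) ≤ C_1^p · C_2 · Mod_p(𝒰_1) for every p > 0. -/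
open scoped ENNReal

/-- The length (sum) of `ρ` over a subset `A` of `V`. -/
noncomputable def modLsum {V : Type*} (ρ : V → NNReal) (A : Set V) : ℝ≥0∞ :=
  ∑' x : A, (ρ x.1 : ℝ≥0∞)

/-- The `p`-mass `M_p(ρ) = ∑_{x ∈ V} ρ(x)^p`. -/
noncomputable def modMp {V : Type*} (p : ℝ) (ρ : V → NNReal) : ℝ≥0∞ :=
  ∑' x, (ρ x : ℝ≥0∞) ^ p

/-- The admissible functions for the family `𝒰`:
`𝒜(𝒰) = {ρ : V → [0,∞) | L_ρ(A) ≥ 1 for all A ∈ 𝒰}`. -/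
def modAdm {V : Type*} (𝒰 : Set (Set V)) : Set (V → NNReal) :=
  {ρ | ∀ A ∈ 𝒰, 1 ≤ modLsum ρ A}

/-- The combinatorial `p`-modulus `Mod_p(𝒰) = inf_{ρ ∈ 𝒜(𝒰)} M_p(ρ)`. -/
noncomputable def modModp {V : Type*} (p : ℝ) (𝒰 : Set (Set V)) : ℝ≥0∞ :=
  ⨅ ρ ∈ modAdm 𝒰, modMp p ρ


/-- Comparison of moduli under a pair of maps `ξ : 𝒰₂ → 𝒰₁`, `F : ℓ₊(V₁) → ℓ₊(V₂)`. -/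
theorem statement6 {V₁ V₂ : Type*} [Fintype V₁] [Fintype V₂]
    (𝒰₁ : Set (Set V₁)) (𝒰₂ : Set (Set V₂)) (p : ℝ) (hp : 0 < p)
    (ξ : Set V₂ → Set V₁) (hξ : ∀ γ ∈ 𝒰₂, ξ γ ∈ 𝒰₁)
    (F : (V₁ → NNReal) → (V₂ → NNReal))
    (C₁ C₂ : NNReal) (hC₁ : 0 < C₁) (hC₂ : 0 < C₂)
    (h1 : ∀ ρ : V₁ → NNReal, ∀ γ ∈ 𝒰₂, modLsum ρ (ξ γ) ≤ (C₁ : ℝ≥0∞) * modLsum (F ρ) γ)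
    (h2 : ∀ ρ : V₁ → NNReal, modMp p (F ρ) ≤ (C₂ : ℝ≥0∞) * modMp p ρ) :
    modModp p 𝒰₂ ≤ (C₁ : ℝ≥0∞) ^ p * (C₂ : ℝ≥0∞) * modModp p 𝒰₁ := by
  have key : ∀ ρ ∈ modAdm 𝒰₁,
      modModp p 𝒰₂ ≤ (C₁ : ℝ≥0∞) ^ p * (C₂ : ℝ≥0∞) * modMp p ρ := by
    intro ρ hρ
    set ρ' : V₂ → NNReal := fun v => C₁ * F ρ v with hρ'def
    have hadm : ρ' ∈ modAdm 𝒰₂ := by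
      intro γ hγ
      have hL : modLsum ρ' γ = (C₁ : ℝ≥0∞) * modLsum (F ρ) γ := by
        simp only [modLsum, hρ'def, ENNReal.coe_mul, ENNReal.tsum_mul_left]
      rw [hL]
      exact le_trans (hρ (ξ γ) (hξ γ hγ)) (h1 ρ γ hγ)
    have hM : modMp p ρ' = (C₁ : ℝ≥0∞) ^ p * modMp p (F ρ) := by
      simp only [modMp, hρ'def, ENNReal.coe_mul,
        ENNReal.mul_rpow_of_nonneg _ _ hp.le, ENNReal.tsum_mul_left]
    calc modModp p 𝒰₂ ≤ modMp p ρ' := by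
          refine iInf₂_le_of_le ρ' hadm le_rfl
      _ = (C₁ : ℝ≥0∞) ^ p * modMp p (F ρ) := hM
      _ ≤ (C₁ : ℝ≥0∞) ^ p * ((C₂ : ℝ≥0∞) * modMp p ρ) :=
          mul_le_mul_right (h2 ρ) _
      _ = (C₁ : ℝ≥0∞) ^ p * (C₂ : ℝ≥0∞) * modMp p ρ := by ring
  have hc : (C₁ : ℝ≥0∞) ^ p * (C₂ : ℝ≥0∞) ≠ ⊤ := by
    apply ENNReal.mul_ne_top _ ENNReal.coe_ne_top
    exact (ENNReal.rpow_lt_top_of_nonneg hp.le ENNReal.coe_ne_top).ne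
  have hz : (C₁ : ℝ≥0∞) ^ p * (C₂ : ℝ≥0∞) ≠ 0 := by
    apply mul_ne_zero
    · exact (ENNReal.rpow_pos (by exact_mod_cast hC₁) ENNReal.coe_ne_top).ne'
    · exact_mod_cast hC₂.ne'
  conv_rhs => rw [modModp]
  rw [ENNReal.mul_iInf_of_ne hz hc]
  refine le_iInf fun ρ => ?_
  rw [ENNReal.mul_iInf_of_ne hz hc]
  exact le_iInf (key ρ)
end

section
/- Let (X, d_X) be a totally bounded metric space and (Y, d_Y) a metric space. Let u_i : X → Y (i ≥ 1) be (possibly discontinuous) functions, η : [0,∞) → [0,∞) monotone increasing with η(t) → 0 as t ↓ 0, and δ_i ≥ 0 with δ_i → 0 such that d_Y(u_i(x_1), u_i(x_2)) ≤ η(d_X(x_1, x_2)) + δ_i for all i and all x_1, x_2 ∈ X. If the closure of ⋃_i u_i(X) is compact, then some subsequence u_{n_j} converges uniformly to a continuous function u : X → Y satisfying d_Y(u(x_1), u(x_2)) ≤ η(d_X(x_1, x_2)) for all x_1, x_2. -/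
open Filter

/-- An Ascoli–Arzelà type theorem for possibly discontinuous functions. -/
theorem statement8 {X Y : Type*} [MetricSpace X] [MetricSpace Y]
    (hX : TotallyBounded (Set.univ : Set X))
    (u : ℕ → X → Y)
    (η : ℝ → ℝ) (hηmono : Monotone η) (hηnn : ∀ t, 0 ≤ η t)
    (hη0 : Tendsto η (nhdsWithin 0 (Set.Ioi 0)) (nhds 0))
    (δ : ℕ → ℝ) (hδnn : ∀ i, 0 ≤ δ i) (hδ : Tendsto δ atTop (nhds 0))
    (hequi : ∀ i (x₁ x₂ : X), dist (u i x₁) (u i x₂) ≤ η (dist x₁ x₂) + δ i)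
    (hcpt : IsCompact (closure (⋃ i, Set.range (u i)))) :
    ∃ φ : ℕ → ℕ, StrictMono φ ∧ ∃ v : X → Y, Continuous v ∧
      TendstoUniformly (fun j => u (φ j)) v atTop ∧
      ∀ x₁ x₂ : X, dist (v x₁) (v x₂) ≤ η (dist x₁ x₂) := by
  set K := closure (⋃ i, Set.range (u i)) with hKdef
  have huK : ∀ i x, u i x ∈ K :=
    fun i x => subset_closure (Set.mem_iUnion.mpr ⟨i, Set.mem_range_self x⟩)
  -- finite nets at scale 1/(n+1)
  have hnet : ∀ n : ℕ, ∃ s : Set X, s.Finite ∧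
      (Set.univ : Set X) ⊆ ⋃ y ∈ s, Metric.ball y (1/(n+1 : ℝ)) := by
    intro n
    exact Metric.totallyBounded_iff.mp hX (1/(n+1 : ℝ)) (by positivity)
  choose s hsfin hscov using hnet
  set D : Set X := ⋃ n, s n with hDdef
  have hDc : D.Countable := Set.countable_iUnion fun n => (hsfin n).countable
  haveI : Countable ↥D := hDc.to_subtype
  -- extract a subsequence converging pointwise on D
  have hpi : IsCompact (Set.pi Set.univ (fun _ : ↥D => K)) :=
    isCompact_univ_pi fun _ => hcpt
  obtain ⟨g, -, φ, hφ, hconv⟩ :=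
    hpi.isSeqCompact (x := fun n (d : ↥D) => u n (d : X))
      (fun n => Set.mem_univ_pi.mpr fun d => huK n d)
  have hpt : ∀ d : ↥D, Tendsto (fun j => u (φ j) (d : X)) atTop (nhds (g d)) :=
    fun d => tendsto_pi_nhds.mp hconv d
  -- small values of η
  have hηsmall : ∀ ε > (0:ℝ), ∃ t > (0:ℝ), η t < ε := by
    intro ε hε
    have h1 : ∀ᶠ t in nhdsWithin 0 (Set.Ioi 0), η t < ε :=
      hη0.eventually_lt_const hε
    have h2 : ∀ᶠ t in nhdsWithin (0:ℝ) (Set.Ioi 0), t ∈ Set.Ioi (0:ℝ) :=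
      eventually_mem_nhdsWithin
    obtain ⟨t, ht1, ht2⟩ := (h1.and h2).exists
    exact ⟨t, ht2, ht1⟩
  -- uniform Cauchy
  have hUC : UniformCauchySeqOn (fun j => u (φ j)) atTop Set.univ := by
    rw [Metric.uniformCauchySeqOn_iff]
    intro ε hε
    obtain ⟨t, ht, hηt⟩ := hηsmall (ε/6) (by positivity)
    obtain ⟨n, hn⟩ := exists_nat_one_div_lt ht
    have hδs : ∀ᶠ i in atTop, δ i < ε/6 := hδ.eventually_lt_const (by positivity)
    obtain ⟨N₁, hN₁⟩ := eventually_atTop.mp hδs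
    have hs' : (Subtype.val ⁻¹' (s n) : Set ↥D).Finite :=
      (hsfin n).preimage Subtype.val_injective.injOn
    have hev : ∀ᶠ j in atTop, ∀ d ∈ (Subtype.val ⁻¹' (s n) : Set ↥D),
        dist (u (φ j) (d : X)) (g d) < ε/6 := by
      rw [hs'.eventually_all]
      intro d _
      have := (hpt d).eventually (Metric.ball_mem_nhds (g d) (by positivity : (0:ℝ) < ε/6))
      exact this.mono fun j hj => Metric.mem_ball.mp hj
    obtain ⟨N₂, hN₂⟩ := eventually_atTop.mp hev
    refine ⟨max N₁ N₂, fun m hm k hk x _ => ?_⟩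
    obtain ⟨y, hy, hxy⟩ := Set.mem_iUnion₂.mp (hscov n (Set.mem_univ x))
    have hxy' : dist x y < t := lt_trans (Metric.mem_ball.mp hxy) hn
    have hyD : y ∈ D := Set.mem_iUnion.mpr ⟨n, hy⟩
    have hδm : δ (φ m) < ε/6 :=
      hN₁ _ (le_trans (le_trans (le_max_left _ _) hm) (hφ.le_apply))
    have hδk : δ (φ k) < ε/6 :=
      hN₁ _ (le_trans (le_trans (le_max_left _ _) hk) (hφ.le_apply))
    have hηd : η (dist x y) ≤ η t := hηmono hxy'.le
    have h1 : dist (u (φ m) x) (u (φ m) y) < ε/6 + ε/6 := by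
      have := hequi (φ m) x y
      have : dist (u (φ m) x) (u (φ m) y) ≤ η t + δ (φ m) := le_trans this (by linarith)
      linarith
    have h4 : dist (u (φ k) y) (u (φ k) x) < ε/6 + ε/6 := by
      have := hequi (φ k) y x
      rw [dist_comm y x] at this
      have : dist (u (φ k) y) (u (φ k) x) ≤ η t + δ (φ k) := le_trans this (by linarith)
      linarith
    have h2 : dist (u (φ m) y) (g ⟨y, hyD⟩) < ε/6 :=
      hN₂ m (le_trans (le_max_right _ _) hm) ⟨y, hyD⟩ hy
    have h3 : dist (u (φ k) y) (g ⟨y, hyD⟩) < ε/6 :=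
      hN₂ k (le_trans (le_max_right _ _) hk) ⟨y, hyD⟩ hy
    calc dist (u (φ m) x) (u (φ k) x)
        ≤ dist (u (φ m) x) (u (φ m) y) + dist (u (φ m) y) (u (φ k) y)
            + dist (u (φ k) y) (u (φ k) x) := dist_triangle4 _ _ _ _
      _ ≤ dist (u (φ m) x) (u (φ m) y)
            + (dist (u (φ m) y) (g ⟨y, hyD⟩) + dist (u (φ k) y) (g ⟨y, hyD⟩))
            + dist (u (φ k) y) (u (φ k) x) := by
          have := dist_triangle_right (u (φ m) y) (u (φ k) y) (g ⟨y, hyD⟩)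
          linarith
      _ < ε := by linarith
  -- pointwise limit
  have hcauchy : ∀ x, ∃ y ∈ K, Tendsto (fun j => u (φ j) x) atTop (nhds y) := by
    intro x
    refine cauchySeq_tendsto_of_isComplete hcpt.isComplete (fun j => huK _ x) ?_
    rw [Metric.cauchySeq_iff]
    intro ε hε
    obtain ⟨N, hN⟩ := Metric.uniformCauchySeqOn_iff.mp hUC ε hε
    exact ⟨N, fun m hm k hk => hN m hm k hk x (Set.mem_univ x)⟩
  choose v hvK hv using hcauchy
  -- modulus for v
  have hmod : ∀ x₁ x₂, dist (v x₁) (v x₂) ≤ η (dist x₁ x₂) := by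
    intro x₁ x₂
    have h1 : Tendsto (fun j => dist (u (φ j) x₁) (u (φ j) x₂)) atTop
        (nhds (dist (v x₁) (v x₂))) := (hv x₁).dist (hv x₂)
    have h2 : Tendsto (fun j => η (dist x₁ x₂) + δ (φ j)) atTop
        (nhds (η (dist x₁ x₂) + 0)) :=
      tendsto_const_nhds.add (hδ.comp hφ.tendsto_atTop)
    rw [add_zero] at h2
    exact le_of_tendsto_of_tendsto' h1 h2 (fun j => hequi (φ j) x₁ x₂)
  have hcont : Continuous v := by
    rw [Metric.continuous_iff]
    intro x ε hε
    obtain ⟨t, ht, hηt⟩ := hηsmall ε hε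
    refine ⟨t, ht, fun y hy => ?_⟩
    calc dist (v y) (v x) ≤ η (dist y x) := hmod y x
      _ ≤ η t := hηmono hy.le
      _ < ε := hηt
  refine ⟨φ, hφ, v, hcont, ?_, hmod⟩
  exact tendstoUniformlyOn_univ.mp (hUC.tendstoUniformlyOn_of_tendsto (fun x _ => hv x))
end

section
/- Let p ≥ 1, A ⊆ T_n, and let {h_w}_{w∈A} with h_w : S^m(A) → [0,1], h_w ≡ 1 on S^m(w), h_w ≡ 0 outside S^m(Γ_M^A(w)), and ℰ_{p,S^m(A)}^{n+m}(h_w) = ℰ_{M,p,m}(w,A) (the optimal conductance). Set h = ∑_{w∈A} h_w and φ_w = h_w / h. Then {φ_w}_{w∈A} is a partition of unity on S^m(A) satisfying: ∑_w φ_w ≡ 1, φ_w ≥ L_*^{−M} on S^m(w), φ_w ≡ 0 off S^m(Γ_M^A(w)), and ℰ_{p,S^m(A)}^{n+m}(φ_w) ≤ (L_*^{2M+1} + 1)^p · max_{w' ∈ Γ_{2M+1}^A(w)} ℰ_{M,p,m}(w', A). -/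
open Finset
open scoped Classical

/-- The discrete `p`-energy of `f` restricted to a set `B` of vertices, for an
edge relation `E`. -/
noncomputable def relEnergy {W : Type*} [Fintype W] (E : W → W → Prop) (B : Set W)
    (p : ℝ) (f : W → ℝ) : ℝ :=
  (1 / 2) * ∑ x, ∑ y, if E x y ∧ x ∈ B ∧ y ∈ B then |f x - f y| ^ p else 0

/-- The `M`-neighborhood `Γ_M(w)` of a cell `w` with respect to the cell adjacency
relation `En`: points reachable by chains of length at most `M`. -/
def Gam {ι : Type*} (En : ι → ι → Prop) : ℕ → ι → Set ι
  | 0, w => {w}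
  | M + 1, w => Gam En M w ∪ {u | ∃ v ∈ Gam En M w, En v u}

/-- The optimal conductance `ℰ_{M,p,m}(w,A)`: the infimum of energies of functions
that are `1` on the cell `S^m(w)` (the fiber of `π` over `w`) and `0` outside
`S^m(Γ_M(w))`. -/
noncomputable def condInf {ι W : Type*} [Fintype W] (Em : W → W → Prop) (π : W → ι)
    (En : ι → ι → Prop) (M : ℕ) (p : ℝ) (w : ι) : ℝ :=
  sInf {e | ∃ f : W → ℝ, (∀ u, π u = w → f u = 1) ∧
    (∀ u, π u ∉ Gam En M w → f u = 0) ∧ e = relEnergy Em Set.univ p f}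

/-!
Each `h_w` equals `1` on the cell `w` and vanishes outside `Γ_M(w)`, so `H = ∑ h_w` satisfies
`1 ≤ H ≤ #Γ_M ≤ L^M`. Along an edge `uv`,
`|φ_w(u) - φ_w(v)| ≤ |h_w(u) - h_w(v)| + |H(u) - H(v)|`, and unless `h_w` vanishes at both ends
only the `h_{w'}` with `w' ∈ Γ_{2M+1}(w)` can change along the edge. The power-mean inequality
over these at most `L^{2M+1} + 1` terms bounds the energy of `φ_w` by
`(L^{2M+1} + 1)^p` times the largest of their energies, which are the optimal conductances.
-/

namespace Gam

variable {ι : Type*} {En : ι → ι → Prop}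

theorem mem_self (M : ℕ) (w : ι) : w ∈ Gam En M w := by
  induction M with
  | zero => rfl
  | succ M ih => exact Or.inl ih

theorem mem_one_of_adj {a b : ι} (hab : En a b) : b ∈ Gam En 1 a :=
  Or.inr ⟨a, rfl, hab⟩

theorem subset_succ (M : ℕ) (w : ι) : Gam En M w ⊆ Gam En (M + 1) w :=
  Set.subset_union_left

theorem subset_of_mem {K : ℕ} (M : ℕ) {x v : ι} (hv : v ∈ Gam En K x) :
    Gam En M v ⊆ Gam En (K + M) x := by
  induction M with
  | zero => rintro u rfl; exact hv
  | succ M ih =>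
    rintro u (hu | ⟨z, hz, hzu⟩)
    · exact subset_succ _ _ (ih hu)
    · exact Or.inr ⟨z, ih hz, hzu⟩

theorem symm (hEn : ∀ x y, En x y → En y x) (M : ℕ) {x y : ι} (h : x ∈ Gam En M y) :
    y ∈ Gam En M x := by
  induction M generalizing x y with
  | zero => exact Eq.symm h
  | succ M ih =>
    rcases h with h | ⟨v, hv, hvx⟩
    · exact subset_succ _ _ (ih h)
    · rw [Nat.add_comm]
      exact subset_of_mem M (mem_one_of_adj (hEn v x hvx)) (ih hv)

theorem mem_add_one_add (hEn : ∀ x y, En x y → En y x) {K M : ℕ} {w a b i : ι}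
    (ha : a ∈ Gam En K w) (hb : b ∈ Gam En 1 a) (hi : b ∈ Gam En M i) :
    i ∈ Gam En (K + 1 + M) w :=
  subset_of_mem M (subset_of_mem 1 ha hb) (symm hEn M hi)

theorem ncard_le [Finite ι] {L : ℕ} (hL : ∀ x : ι, (Gam En 1 x).ncard ≤ L) (M : ℕ)
    (x : ι) :
    (Gam En M x).ncard ≤ L ^ M := by
  induction M with
  | zero => simp [Gam]
  | succ M ih =>
    let t := (Set.toFinite (Gam En M x)).toFinset
    have hcover : Gam En (M + 1) x ⊆ ⋃ v ∈ t, Gam En 1 v := by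
      rintro u (hu | ⟨v, hv, hvu⟩)
      · exact Set.mem_biUnion (by simpa [t] using hu) (mem_self 1 u)
      · exact Set.mem_biUnion (by simpa [t] using hv) (mem_one_of_adj hvu)
    calc (Gam En (M + 1) x).ncard
        ≤ (⋃ v ∈ t, Gam En 1 v).ncard := Set.ncard_le_ncard hcover (Set.toFinite _)
      _ ≤ ∑ v ∈ t, (Gam En 1 v).ncard := t.set_ncard_biUnion_le _
      _ ≤ t.card * L := by simpa using Finset.sum_le_card_nsmul t _ L fun v _ => hL v
      _ ≤ L ^ M * L := by
        rw [← Set.ncard_eq_toFinset_card _ (Set.toFinite _)]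
        exact Nat.mul_le_mul_right L ih
      _ = L ^ (M + 1) := (pow_succ L M).symm

end Gam

theorem abs_div_sub_div_le {a b A B : ℝ} (hb₀ : 0 ≤ b) (hb₁ : b ≤ 1) (hA : 1 ≤ A)
    (hB : 1 ≤ B) :
    |a / A - b / B| ≤ |a - b| + |A - B| := by
  have hA₀ : 0 < A := by linarith
  have hB₀ : 0 < B := by linarith
  have hsplit : a / A - b / B = (a - b) / A + b * (B - A) / (A * B) := by
    field_simp
    ring
  have hfirst : |(a - b) / A| ≤ |a - b| := by
    rw [abs_div, abs_of_pos hA₀]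
    exact div_le_self (abs_nonneg _) hA
  have hsecond : |b * (B - A) / (A * B)| ≤ |A - B| := by
    rw [abs_div, abs_mul, abs_of_nonneg hb₀, abs_of_pos (mul_pos hA₀ hB₀), abs_sub_comm]
    calc b * |A - B| / (A * B) ≤ b * |A - B| :=
          div_le_self (by positivity) (by nlinarith)
      _ ≤ |A - B| := mul_le_of_le_one_left (abs_nonneg _) hb₁
  calc |a / A - b / B| ≤ |(a - b) / A| + |b * (B - A) / (A * B)| := by
        rw [hsplit]; exact abs_add_le _ _
    _ ≤ |a - b| + |A - B| := add_le_add hfirst hsecond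

section Energy

variable {W : Type*} [Fintype W]

theorem relEnergy_nonneg (E : W → W → Prop) (B : Set W) (p : ℝ) (f : W → ℝ) :
    0 ≤ relEnergy E B p f := by
  unfold relEnergy
  refine mul_nonneg (by norm_num) (Finset.sum_nonneg fun x _ => Finset.sum_nonneg fun y _ => ?_)
  split_ifs
  exacts [Real.rpow_nonneg (abs_nonneg _) p, le_rfl]

theorem relEnergy_le_mul_sum {κ : Type*} {E : W → W → Prop} {B : Set W} {p C : ℝ}
    {f : W → ℝ} {g : κ → W → ℝ} {s : Finset κ}
    (hfg : ∀ x y, E x y → x ∈ B → y ∈ B →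
      |f x - f y| ^ p ≤ C * ∑ i ∈ s, |g i x - g i y| ^ p) :
    relEnergy E B p f ≤ C * ∑ i ∈ s, relEnergy E B p (g i) := by
  calc relEnergy E B p f ≤ (1 / 2) * ∑ x, ∑ y, ∑ i ∈ s,
        C * if E x y ∧ x ∈ B ∧ y ∈ B then |g i x - g i y| ^ p else 0 := by
        unfold relEnergy
        gcongr with x _ y _
        split_ifs with hxy
        exacts [(hfg x y hxy.1 hxy.2.1 hxy.2.2).trans_eq (Finset.mul_sum _ _ _), by simp]
    _ = C * ∑ i ∈ s, relEnergy E B p (g i) := by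
        simp only [relEnergy, Finset.mul_sum, Finset.sum_comm (s := s), mul_left_comm (1 / 2 : ℝ)]

theorem relEnergy_le_card_rpow_mul {κ : Type*} {E : W → W → Prop} {B : Set W} {p S : ℝ}
    (hp : 1 ≤ p) {f : W → ℝ} {g : κ → W → ℝ} {s : Finset κ}
    (hfg : ∀ x y, E x y → x ∈ B → y ∈ B → |f x - f y| ≤ ∑ i ∈ s, |g i x - g i y|)
    (hg : ∀ i ∈ s, relEnergy E B p (g i) ≤ S) :
    relEnergy E B p f ≤ (#s : ℝ) ^ p * S := by
  have hpow : ∀ x y, E x y → x ∈ B → y ∈ B →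
      |f x - f y| ^ p ≤ (#s : ℝ) ^ (p - 1) * ∑ i ∈ s, |g i x - g i y| ^ p :=
    fun x y hxy hx hy =>
    (Real.rpow_le_rpow (abs_nonneg _) (hfg x y hxy hx hy) (by linarith)).trans
      (Real.rpow_sum_le_const_mul_sum_rpow_of_nonneg s hp fun _ _ => abs_nonneg _)
  calc relEnergy E B p f ≤ (#s : ℝ) ^ (p - 1) * ∑ i ∈ s, relEnergy E B p (g i) :=
        relEnergy_le_mul_sum hpow
    _ ≤ (#s : ℝ) ^ (p - 1) * (#s * S) := by
        gcongr
        simpa using Finset.sum_le_card_nsmul s _ S hg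
    _ = (#s : ℝ) ^ p * S := by
        rw [← mul_assoc, ← Real.rpow_add_one' (Nat.cast_nonneg _) (by linarith), sub_add_cancel]

end Energy

section PartitionOfUnity

variable {ι W : Type*} {En : ι → ι → Prop} {Em : W → W → Prop} {π : W → ι}
  {h : ι → W → ℝ} {M : ℕ}

theorem one_le_sum_apply [Fintype ι] (hrange : ∀ w u, h w u ∈ Set.Icc (0 : ℝ) 1)
    (hone : ∀ w u, π u = w → h w u = 1) (u : W) : 1 ≤ ∑ v, h v u := by
  simpa [hone (π u) u rfl] using
    Finset.single_le_sum (fun v _ => (hrange v u).1) (Finset.mem_univ (π u))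

theorem sum_apply_le_ncard [Fintype ι] (hEn : ∀ x y, En x y → En y x)
    (hrange : ∀ w u, h w u ∈ Set.Icc (0 : ℝ) 1)
    (hzero : ∀ w u, π u ∉ Gam En M w → h w u = 0) (u : W) :
    ∑ v, h v u ≤ (Gam En M (π u)).ncard := by
  rw [← Finset.sum_subset (Finset.subset_univ _) fun v _ hv =>
    hzero v u fun hu => hv (Set.mem_toFinset.2 (Gam.symm hEn M hu))]
  refine (Finset.sum_le_card_nsmul _ _ 1 fun v _ => (hrange v u).2).trans_eq ?_
  simp [Set.ncard_eq_toFinset_card']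

theorem mem_Gam_one_of_edge (hcompat : ∀ u v : W, Em u v → π u = π v ∨ En (π u) (π v))
    {u v : W} (huv : Em u v) : π v ∈ Gam En 1 (π u) := by
  rcases hcompat u v huv with heq | hadj
  · exact heq ▸ Gam.mem_self 1 (π u)
  · exact Gam.mem_one_of_adj hadj

theorem mem_Gam_of_apply_ne (hEn : ∀ x y, En x y → En y x)
    (hcompat : ∀ u v : W, Em u v → π u = π v ∨ En (π u) (π v))
    (hzero : ∀ w u, π u ∉ Gam En M w → h w u = 0) {u v : W} (huv : Em u v) {w i : ι}
    (hw : h w u ≠ 0 ∨ h w v ≠ 0) (hi : h i u ≠ h i v) : i ∈ Gam En (2 * M + 1) w := by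
  have hpair :
      ∀ a ∈ ({π u, π v} : Set ι), ∀ b ∈ ({π u, π v} : Set ι), b ∈ Gam En 1 a := by
    rintro a (rfl | rfl) b (rfl | rfl)
    exacts [Gam.mem_self 1 _, mem_Gam_one_of_edge hcompat huv,
      Gam.symm hEn 1 (mem_Gam_one_of_edge hcompat huv), Gam.mem_self 1 _]
  obtain ⟨a, ha, haw⟩ : ∃ a ∈ ({π u, π v} : Set ι), a ∈ Gam En M w := by
    by_contra! hfar
    exact hw.elim (· (hzero w u (hfar _ (.inl rfl)))) (· (hzero w v (hfar _ (.inr rfl))))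
  obtain ⟨b, hb, hbi⟩ : ∃ b ∈ ({π u, π v} : Set ι), b ∈ Gam En M i := by
    by_contra! hfar
    exact hi (by rw [hzero i u (hfar _ (.inl rfl)), hzero i v (hfar _ (.inr rfl))])
  have := Gam.mem_add_one_add hEn haw (hpair a ha b hb) hbi
  rwa [show M + 1 + M = 2 * M + 1 by ring] at this

theorem abs_div_sum_sub_div_sum_le [Fintype ι] (hEn : ∀ x y, En x y → En y x)
    (hcompat : ∀ u v : W, Em u v → π u = π v ∨ En (π u) (π v))
    (hrange : ∀ w u, h w u ∈ Set.Icc (0 : ℝ) 1) (hone : ∀ w u, π u = w → h w u = 1)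
    (hzero : ∀ w u, π u ∉ Gam En M w → h w u = 0) (w : ι) {u v : W} (huv : Em u v) :
    |h w u / ∑ i, h i u - h w v / ∑ i, h i v| ≤
      |h w u - h w v| + ∑ i ∈ (Gam En (2 * M + 1) w).toFinset, |h i u - h i v| := by
  by_cases hw : h w u = 0 ∧ h w v = 0
  · rw [hw.1, hw.2, zero_div, zero_div, sub_zero, abs_zero]
    positivity
  have hsum :
      ∑ i, h i u - ∑ i, h i v = ∑ i ∈ (Gam En (2 * M + 1) w).toFinset, (h i u - h i v) := by
    rw [← Finset.sum_sub_distrib]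
    refine (Finset.sum_subset (Finset.subset_univ _) fun i _ hi => ?_).symm
    by_contra hne
    exact hi (Set.mem_toFinset.2 (mem_Gam_of_apply_ne hEn hcompat hzero huv
      (not_and_or.1 hw) (sub_ne_zero.1 hne)))
  calc |h w u / ∑ i, h i u - h w v / ∑ i, h i v|
      ≤ |h w u - h w v| + |∑ i, h i u - ∑ i, h i v| :=
        abs_div_sub_div_le (hrange w v).1 (hrange w v).2 (one_le_sum_apply hrange hone u)
          (one_le_sum_apply hrange hone v)
    _ ≤ |h w u - h w v| + ∑ i ∈ (Gam En (2 * M + 1) w).toFinset, |h i u - h i v| := by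
        rw [hsum]
        gcongr
        exact Finset.abs_sum_le_sum_abs _ _

end PartitionOfUnity

theorem relEnergy_div_sum_le {ι W : Type*} [Fintype ι] [Fintype W] {En : ι → ι → Prop}
    {Em : W → W → Prop} {π : W → ι} {h : ι → W → ℝ} {L M : ℕ} {p S : ℝ}
    (hEn : ∀ x y, En x y → En y x)
    (hcompat : ∀ u v : W, Em u v → π u = π v ∨ En (π u) (π v))
    (hL : ∀ x : ι, (Gam En 1 x).ncard ≤ L) (hp : 1 ≤ p)
    (hrange : ∀ w u, h w u ∈ Set.Icc (0 : ℝ) 1) (hone : ∀ w u, π u = w → h w u = 1)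
    (hzero : ∀ w u, π u ∉ Gam En M w → h w u = 0) (w : ι)
    (hS : ∀ w' ∈ Gam En (2 * M + 1) w, relEnergy Em Set.univ p (h w') ≤ S) :
    relEnergy Em Set.univ p (fun u => h w u / ∑ v, h v u) ≤
      ((L : ℝ) ^ (2 * M + 1) + 1) ^ p * S := by
  set Γ := (Gam En (2 * M + 1) w).toFinset
  have hS₀ : 0 ≤ S := (relEnergy_nonneg _ _ _ _).trans (hS w (Gam.mem_self _ w))
  have hΓ : (#Γ : ℝ) ≤ (L : ℝ) ^ (2 * M + 1) := by
    rw [← Set.ncard_eq_toFinset_card']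
    exact_mod_cast Gam.ncard_le hL _ w
  -- the extra index `none` carries `h w` itself, next to the `h w'` with `w' ∈ Γ`
  calc relEnergy Em Set.univ p (fun u => h w u / ∑ v, h v u)
      ≤ (#Γ.insertNone : ℝ) ^ p * S := by
        refine relEnergy_le_card_rpow_mul (g := fun o => o.elim (h w) h) hp
          (fun x y hxy _ _ => ?_) ?_
        · simpa using abs_div_sum_sub_div_sum_le hEn hcompat hrange hone hzero w hxy
        · rintro (_ | w') hw'
          exacts [hS w (Gam.mem_self _ w), hS w' (by simpa [Γ] using hw')]
    _ ≤ ((L : ℝ) ^ (2 * M + 1) + 1) ^ p * S := by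
        rw [Finset.card_insertNone, Nat.cast_succ]
        gcongr

theorem statement14_general {ι W : Type*} [Fintype ι] [Fintype W]
    (En : ι → ι → Prop) (hEn : ∀ x y, En x y → En y x)
    (Em : W → W → Prop)
    (π : W → ι)
    (hcompat : ∀ u v : W, Em u v → π u = π v ∨ En (π u) (π v))
    (L M : ℕ) (hL : ∀ x : ι, (Gam En 1 x).ncard ≤ L)
    (p : ℝ) (hp : 1 ≤ p)
    (h : ι → W → ℝ)
    (hrange : ∀ w u, h w u ∈ Set.Icc (0 : ℝ) 1)
    (hone : ∀ w u, π u = w → h w u = 1)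
    (hzero : ∀ w u, π u ∉ Gam En M w → h w u = 0)
    (hopt : ∀ w, relEnergy Em Set.univ p (h w) = condInf Em π En M p w) :
    (∀ u : W, ∑ w, h w u / (∑ v, h v u) = 1) ∧
    (∀ w u, π u = w → ((L : ℝ) ^ M)⁻¹ ≤ h w u / (∑ v, h v u)) ∧
    (∀ w u, π u ∉ Gam En M w → h w u / (∑ v, h v u) = 0) ∧
    (∀ w, relEnergy Em Set.univ p (fun u => h w u / (∑ v, h v u)) ≤
      ((L : ℝ) ^ (2 * M + 1) + 1) ^ p *
        sSup {e | ∃ w' ∈ Gam En (2 * M + 1) w, e = condInf Em π En M p w'}) := by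
  have hsum_pos : ∀ u, 0 < ∑ v, h v u := fun u =>
    one_pos.trans_le (one_le_sum_apply hrange hone u)
  refine ⟨fun u => ?_, fun w u hu => ?_, fun w u hu => ?_, fun w => ?_⟩
  · rw [← Finset.sum_div, div_self (hsum_pos u).ne']
  · rw [hone w u hu, one_div]
    refine inv_anti₀ (hsum_pos u) ((sum_apply_le_ncard hEn hrange hzero u).trans ?_)
    exact_mod_cast Gam.ncard_le hL M (π u)
  · rw [hzero w u hu, zero_div]
  · refine relEnergy_div_sum_le hEn hcompat hL hp hrange hone hzero w fun w' hw' => ?_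
    have hfin : {e | ∃ w' ∈ Gam En (2 * M + 1) w, e = condInf Em π En M p w'}.Finite :=
      (Set.finite_range fun w' => condInf Em π En M p w').subset
        fun _ ⟨w', _, he⟩ => ⟨w', he.symm⟩
    exact (hopt w').trans_le (le_csSup hfin.bddAbove ⟨w', hw', rfl⟩)

/-- Existence of a partition of unity `φ_w = h_w / ∑ h_v` built from optimal
conductance functions `h_w`, with energies controlled by the conductance
exponents of the `(2M+1)`-neighborhood. -/
theorem statement14 {ι W : Type*} [Fintype ι] [Fintype W]
    (En : ι → ι → Prop) (hEn : ∀ x y, En x y → En y x)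
    (Em : W → W → Prop) (hEm : ∀ x y, Em x y → Em y x)
    (π : W → ι)
    (hcompat : ∀ u v : W, Em u v → π u = π v ∨ En (π u) (π v))
    (L M : ℕ) (hL : ∀ x : ι, (Gam En 1 x).ncard ≤ L)
    (p : ℝ) (hp : 1 ≤ p)
    (h : ι → W → ℝ)
    (hrange : ∀ w u, h w u ∈ Set.Icc (0 : ℝ) 1)
    (hone : ∀ w u, π u = w → h w u = 1)
    (hzero : ∀ w u, π u ∉ Gam En M w → h w u = 0)
    (hopt : ∀ w, relEnergy Em Set.univ p (h w) = condInf Em π En M p w) :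
    (∀ u : W, ∑ w, h w u / (∑ v, h v u) = 1) ∧
    (∀ w u, π u = w → ((L : ℝ) ^ M)⁻¹ ≤ h w u / (∑ v, h v u)) ∧
    (∀ w u, π u ∉ Gam En M w → h w u / (∑ v, h v u) = 0) ∧
    (∀ w, relEnergy Em Set.univ p (fun u => h w u / (∑ v, h v u)) ≤
      ((L : ℝ) ^ (2 * M + 1) + 1) ^ p *
        sSup {e | ∃ w' ∈ Gam En (2 * M + 1) w, e = condInf Em π En M p w'}) :=
  statement14_general En hEn Em π hcompat L M hL p hp h hrange hone hzero hopt
end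

section
/- Let a_m, b_m > 0 for m ≥ 0 satisfy: (i) a_{m+n} ≤ C a_m a_n for all m, n (sub-multiplicativity of a); (ii) b_{m+n} ≤ C b_m b_n for all m, n; (iii) c ≤ a_m b_m ≤ C for all m (two-sided comparison). Then there exist σ > 0 and constants c', C' > 0 such that c' σ^m ≤ a_m ≤ C' σ^m and c'σ^{-m} ≤ b_m ≤ C' σ^{-m} for all m ≥ 0. -/
/-!
Taking logarithms, `log (C a_m)` is subadditive, and conditions (ii), (iii) make `a` also
super-multiplicative up to a constant, so `log (D a_m)` is superadditive for some `D > 0`.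
For a subadditive `f` above a superadditive `g`, iterating gives `m g(n) ≤ g(mn) ≤ f(mn) ≤ n f(m)`,
so every `g n / n` lies below every `f m / m`; any `t` in between satisfies
`g n ≤ n t ≤ f n`, and `σ = exp t` works. The bounds on `b` then follow from `b_m ≍ 1 / a_m`.
-/

open Real

namespace Subadditive

variable {f : ℕ → ℝ}

theorem apply_succ_mul_le (hf : Subadditive f) (k n : ℕ) : f ((k + 1) * n) ≤ (k + 1) * f n := by
  simpa [Nat.succ_mul, add_mul] using hf.apply_mul_add_le k n n

theorem apply_zero_nonneg (hf : Subadditive f) : 0 ≤ f 0 := by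
  simpa using hf 0 0

theorem exists_forall_le_mul_le {g : ℕ → ℝ} (hf : Subadditive f) (hg : Subadditive (-g))
    (hgf : g ≤ f) : ∃ t : ℝ, ∀ n : ℕ, g n ≤ n * t ∧ n * t ≤ f n := by
  have cross : ∀ m n : ℕ, g (n + 1) / (n + 1) ≤ f (m + 1) / (m + 1) := by
    intro m n
    have hg_mul : ((m : ℝ) + 1) * g (n + 1) ≤ g ((m + 1) * (n + 1)) := by
      simpa using hg.apply_succ_mul_le m (n + 1)
    have hf_mul : f ((m + 1) * (n + 1)) ≤ ((n : ℝ) + 1) * f (m + 1) :=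
      Nat.mul_comm (n + 1) (m + 1) ▸ hf.apply_succ_mul_le n (m + 1)
    rw [div_le_div_iff₀ (by positivity) (by positivity)]
    linarith [hgf ((m + 1) * (n + 1))]
  obtain ⟨t, ht_upper, ht_lower⟩ := exists_between_of_forall_le (Set.range_nonempty _)
    (Set.range_nonempty _) (by rintro _ ⟨n, rfl⟩ _ ⟨m, rfl⟩; exact cross m n)
  refine ⟨t, fun n => ?_⟩
  cases n with
  | zero => simpa using ⟨neg_nonneg.mp hg.apply_zero_nonneg, hf.apply_zero_nonneg⟩
  | succ n =>
    have hg_le := ht_upper ⟨n, rfl⟩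
    have hf_ge := ht_lower ⟨n, rfl⟩
    simp only [Nat.cast_add, Nat.cast_one] at hg_le hf_ge ⊢
    rw [div_le_iff₀' (by positivity)] at hg_le
    rw [le_div_iff₀' (by positivity)] at hf_ge
    exact ⟨hg_le, hf_ge⟩

end Subadditive

section Submultiplicative

variable {a : ℕ → ℝ}

theorem subadditive_log_mul_of_submultiplicative {C : ℝ} (hC : 0 < C) (ha : ∀ n, 0 < a n)
    (hsub : ∀ m n, a (m + n) ≤ C * a m * a n) : Subadditive fun n => log (C * a n) := by
  intro m n
  have hm := ha m
  have hn := ha n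
  rw [← log_mul (by positivity) (by positivity)]
  refine log_le_log (mul_pos hC (ha _)) ?_
  nlinarith [hsub m n]

theorem subadditive_neg_log_mul_of_supermultiplicative {D : ℝ} (hD : 0 < D)
    (ha : ∀ n, 0 < a n) (hsup : ∀ m n, D * a m * a n ≤ a (m + n)) :
    Subadditive fun n => -log (D * a n) := by
  intro m n
  have hm := ha m
  have hn := ha n
  rw [← neg_add, neg_le_neg_iff, ← log_mul (by positivity) (by positivity)]
  refine log_le_log (by positivity) ?_
  nlinarith [hsup m n]

theorem exists_pow_bounds_of_submultiplicative_of_supermultiplicative {C D : ℝ}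
    (ha : ∀ n, 0 < a n) (hD : 0 < D) (hsub : ∀ m n, a (m + n) ≤ C * a m * a n)
    (hsup : ∀ m n, D * a m * a n ≤ a (m + n)) :
    ∃ σ > 0, ∀ n : ℕ, σ ^ n / C ≤ a n ∧ a n ≤ σ ^ n / D := by
  have ha0 : 0 < a 0 * a 0 := mul_pos (ha 0) (ha 0)
  have hC : 0 < C := by nlinarith [hsub 0 0, ha 0]
  have hDC : D ≤ C := by nlinarith [hsub 0 0, hsup 0 0]
  obtain ⟨t, ht⟩ := (subadditive_log_mul_of_submultiplicative hC ha hsub).exists_forall_le_mul_le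
    (g := fun n => log (D * a n)) (subadditive_neg_log_mul_of_supermultiplicative hD ha hsup)
    fun n => log_le_log (mul_pos hD (ha n)) (mul_le_mul_of_nonneg_right hDC (ha n).le)
  refine ⟨exp t, exp_pos t, fun n => ?_⟩
  obtain ⟨hlow, hup⟩ := ht n
  rw [log_le_iff_le_exp (mul_pos hD (ha n)), exp_nat_mul] at hlow
  rw [le_log_iff_exp_le (mul_pos hC (ha n)), exp_nat_mul] at hup
  rw [div_le_iff₀' hC, le_div_iff₀' hD]
  exact ⟨hup, hlow⟩

end Submultiplicative

section Reciprocal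

variable {x y s : ℝ}

theorem mul_mul_inv_le_of_le_mul_of_le_div {c D : ℝ} (hy : 0 < y) (hs : 0 < s) (hD : 0 < D)
    (hc : c ≤ x * y) (hx : x ≤ s / D) : c * D * s⁻¹ ≤ y := by
  rw [← div_eq_mul_inv, div_le_iff₀ hs]
  calc c * D ≤ x * y * D := mul_le_mul_of_nonneg_right hc hD.le
    _ = x * D * y := by ring
    _ ≤ s * y := mul_le_mul_of_nonneg_right ((le_div_iff₀ hD).1 hx) hy.le
    _ = y * s := mul_comm s y

theorem le_mul_mul_inv_of_mul_le_of_div_le {C L : ℝ} (hy : 0 < y) (hs : 0 < s) (hL : 0 < L)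
    (hC : x * y ≤ C) (hx : s / L ≤ x) : y ≤ C * L * s⁻¹ := by
  rw [← div_eq_mul_inv, le_div_iff₀ hs]
  calc y * s ≤ y * (x * L) := mul_le_mul_of_nonneg_left ((div_le_iff₀ hL).1 hx) hy.le
    _ = x * y * L := by ring
    _ ≤ C * L := mul_le_mul_of_nonneg_right hC hL.le

end Reciprocal

theorem supermultiplicative_of_submultiplicative_of_mul_bounds {a b : ℕ → ℝ} {c C : ℝ}
    (ha : ∀ m, 0 < a m) (hb : ∀ m, 0 < b m) (hC : 0 < C)
    (hsubb : ∀ m n, b (m + n) ≤ C * b m * b n)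
    (hcomp : ∀ m, c ≤ a m * b m ∧ a m * b m ≤ C) (m n : ℕ) :
    c / C ^ 3 * a m * a n ≤ a (m + n) := by
  have ham := ha m
  have han := ha n
  have hamn := ha (m + n)
  have hbm := hb m
  have hbn := hb n
  have key : c * (a m * a n) ≤ C ^ 3 * a (m + n) :=
    calc c * (a m * a n) ≤ a (m + n) * b (m + n) * (a m * a n) := by gcongr; exact (hcomp _).1
      _ ≤ a (m + n) * (C * b m * b n) * (a m * a n) := by gcongr; exact hsubb m n
      _ = C * a (m + n) * ((a m * b m) * (a n * b n)) := by ring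
      _ ≤ C * a (m + n) * (C * C) := by gcongr <;> exact (hcomp _).2
      _ = C ^ 3 * a (m + n) := by ring
  calc c / C ^ 3 * a m * a n = c * (a m * a n) / C ^ 3 := by ring
    _ ≤ a (m + n) := (div_le_iff₀' (by positivity)).2 key

/-- The sequence-theoretic core of the conductive-homogeneity theorem: if two
positive sequences `a`, `b` are sub-multiplicative up to a constant and
`a_m b_m` is bounded above and below by positive constants, then `a_m` is
comparable to `σ^m` and `b_m` to `σ^{-m}` for some `σ > 0`. -/
theorem statement18 (a b : ℕ → ℝ) (ha : ∀ m, 0 < a m) (hb : ∀ m, 0 < b m)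
    (c C : ℝ) (hc : 0 < c) (hC : 0 < C)
    (hsuba : ∀ m n, a (m + n) ≤ C * a m * a n)
    (hsubb : ∀ m n, b (m + n) ≤ C * b m * b n)
    (hcomp : ∀ m, c ≤ a m * b m ∧ a m * b m ≤ C) :
    ∃ σ c' C' : ℝ, 0 < σ ∧ 0 < c' ∧ 0 < C' ∧
      ∀ m : ℕ, (c' * σ ^ m ≤ a m ∧ a m ≤ C' * σ ^ m) ∧
        (c' * (σ ^ m)⁻¹ ≤ b m ∧ b m ≤ C' * (σ ^ m)⁻¹) := by
  set D := c / C ^ 3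
  have hD : 0 < D := by positivity
  obtain ⟨σ, hσ, ha_bounds⟩ := exists_pow_bounds_of_submultiplicative_of_supermultiplicative ha hD
    hsuba (supermultiplicative_of_submultiplicative_of_mul_bounds ha hb hC hsubb hcomp)
  refine ⟨σ, min C⁻¹ (c * D), max D⁻¹ (C * C), hσ, by positivity, by positivity, fun m => ?_⟩
  obtain ⟨ha_low, ha_up⟩ := ha_bounds m
  have hσm : 0 < σ ^ m := pow_pos hσ m
  refine ⟨⟨?_, ?_⟩, ?_, ?_⟩
  · calc min C⁻¹ (c * D) * σ ^ m ≤ C⁻¹ * σ ^ m := by gcongr; exact min_le_left _ _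
      _ = σ ^ m / C := inv_mul_eq_div C (σ ^ m)
      _ ≤ a m := ha_low
  · calc a m ≤ σ ^ m / D := ha_up
      _ = D⁻¹ * σ ^ m := (inv_mul_eq_div D (σ ^ m)).symm
      _ ≤ max D⁻¹ (C * C) * σ ^ m := by gcongr; exact le_max_left _ _
  · calc min C⁻¹ (c * D) * (σ ^ m)⁻¹ ≤ c * D * (σ ^ m)⁻¹ := by gcongr; exact min_le_right _ _
      _ ≤ b m := mul_mul_inv_le_of_le_mul_of_le_div (hb m) hσm hD (hcomp m).1 ha_up
  · calc b m ≤ C * C * (σ ^ m)⁻¹ :=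
          le_mul_mul_inv_of_mul_le_of_div_le (hb m) hσm hC (hcomp m).2 ha_low
      _ ≤ max D⁻¹ (C * C) * (σ ^ m)⁻¹ := by gcongr; exact le_max_right _ _
end
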